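/- arXiv:1310.1312 — 2 statements merged into one kernel-verified Lean document; each statement's English description precedes it below -/
import Mathlib

section
/- For every n ≥ 1 and every probability vector λ = (λ_1, …, λ_n) with pairwise distinct, strictly positive entries, the closed-form expression for subentropy agrees with the integral expression: −Σ_{i=1}^n (λ_i^n / Π_{j ≠ i}(λ_i − λ_j)) · ln λ_i = n ∫_{Δ_n} η(λ·x) dx − C_n. -/
open MeasureTheory Matrix
open scoped ComplexOrder

/-- η(y) = −y ln y (with ln 0 = 0 in Mathlib, so 0 ln 0 = 0). -/
noncomputable def eta (y : ℝ) : ℝ := -(y * Real.log y)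

/-- C_n = 1/2 + 1/3 + ⋯ + 1/n (C_1 = 0). -/
noncomputable def harmC (n : ℕ) : ℝ := ∑ k ∈ Finset.Icc 2 n, (1 : ℝ) / k

/-- Integral of a function over the probability simplex Δ_n with respect to the
normalized uniform measure dx = (n−1)! dx_1 ⋯ dx_{n−1}, realised in the coordinates
(x_1, …, x_{n−1}), with x_n = 1 − (x_1 + ⋯ + x_{n−1}). -/
noncomputable def simplexIntegral (n : ℕ) (f : (Fin n → ℝ) → ℝ) : ℝ :=
  ((n - 1).factorial : ℝ) *
    ∫ y in {y : Fin (n - 1) → ℝ | (∀ i, 0 ≤ y i) ∧ ∑ i, y i ≤ 1},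
      f (fun i => if h : (i : ℕ) < n - 1 then y ⟨(i : ℕ), h⟩ else 1 - ∑ j, y j)

/-- Subentropy of a probability vector: F(λ) = n ∫_{Δ_n} η(λ·x) dx − C_n. -/
noncomputable def subF (n : ℕ) (lam : Fin n → ℝ) : ℝ :=
  (n : ℝ) * simplexIntegral n (fun x => eta (∑ i, lam i * x i)) - harmC n

/-- Subentropy of a (Hermitian) matrix: Q(ρ) = F(λ(ρ)), the subentropy of its
eigenvalue vector (junk value 0 for non-Hermitian matrices). -/
noncomputable def Qmat {ι : Type} [Fintype ι] [DecidableEq ι] (ρ : Matrix ι ι ℂ) : ℝ :=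
  if h : ρ.IsHermitian then
    subF (Fintype.card ι) (fun k => h.eigenvalues ((Fintype.equivFin ι).symm k))
  else 0

/-!
Hermite–Genocchi: for distinct nodes `λᵢ` and `G` of class `Cⁿ⁻¹`, the integral of `G⁽ⁿ⁻¹⁾(λ·x)`
over the simplex (Lebesgue measure in the coordinates `x₁, …, xₙ₋₁`) is the divided difference
`∑ᵢ G(λᵢ) / ∏_{j ≠ i} (λᵢ - λⱼ)`. Integrating out the last coordinate with the fundamental
theorem of calculus gives a difference quotient of two integrals over a smaller simplex, which is
the divided-difference recurrence; the latter holds because a divided difference is the leading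
coefficient of a Lagrange interpolation polynomial. Apply this to the `(n-1)`-fold antiderivative
`G(y) = (Cₙ yⁿ - yⁿ ln y) / n!` of `η`: the `Cₙ` term cancels because the divided difference of
`yⁿ` at `n` nodes is `∑ᵢ λᵢ = 1`.
-/

open Finset
open scoped Nat

section DividedDifference

open Polynomial

variable {F ι : Type*} [Field F] [DecidableEq ι]

noncomputable def divDiff (s : Finset ι) (v : ι → F) (G : F → F) : F :=
  ∑ i ∈ s, G (v i) / ∏ j ∈ s.erase i, (v i - v j)

theorem coeff_basis_card_sub_one {s : Finset ι} {v : ι → F} {i : ι} (hi : i ∈ s) :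
    (Lagrange.basis s v i).coeff (#s - 1) = (∏ j ∈ s.erase i, (v i - v j))⁻¹ := by
  have hmonic : (∏ j ∈ s.erase i, (X - C (v j))).Monic :=
    monic_prod_of_monic _ _ fun j _ => monic_X_sub_C _
  have hdeg : (∏ j ∈ s.erase i, (X - C (v j))).natDegree = #s - 1 := by
    rw [natDegree_prod_of_monic _ _ fun j _ => monic_X_sub_C _]
    simp [card_erase_of_mem hi]
  simp only [Lagrange.basis, Lagrange.basisDivisor]
  rw [prod_mul_distrib, ← map_prod, coeff_C_mul, ← hdeg,
    hmonic.coeff_natDegree, mul_one, prod_inv_distrib]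

theorem divDiff_eq_coeff_interpolate (s : Finset ι) (v : ι → F) (G : F → F) :
    divDiff s v G = (Lagrange.interpolate s v fun i => G (v i)).coeff (#s - 1) := by
  rw [Lagrange.interpolate_apply, finsetSum_coeff, divDiff]
  refine sum_congr rfl fun i hi => ?_
  rw [coeff_C_mul, coeff_basis_card_sub_one hi, div_eq_mul_inv]

theorem divDiff_eval_of_degree_lt {s : Finset ι} {v : ι → F} (hvs : Set.InjOn v s) {p : F[X]}
    (hp : p.degree < #s) : divDiff s v (fun x => p.eval x) = p.coeff (#s - 1) := by
  rw [divDiff_eq_coeff_interpolate, ← Lagrange.eq_interpolate hvs hp]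

theorem divDiff_pow_card {s : Finset ι} {v : ι → F} (hvs : Set.InjOn v s) :
    divDiff s v (· ^ #s) = ∑ i ∈ s, v i := by
  rcases s.eq_empty_or_nonempty with rfl | hne
  · simp [divDiff]
  -- `X ^ #s - nodal s v` has degree `< #s` and takes the values `v i ^ #s` at the nodes.
  set p : F[X] := X ^ #s - Lagrange.nodal s v
  have hp : p.degree < #s := by
    have h := degree_sub_lt_left (p := X ^ #s) (q := Lagrange.nodal s v)
      (by rw [degree_X_pow, Lagrange.degree_nodal]) (pow_ne_zero _ X_ne_zero)
      (by rw [leadingCoeff_X_pow, Lagrange.nodal_monic.leadingCoeff])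
    rwa [degree_X_pow] at h
  have hnodes : divDiff s v (· ^ #s) = divDiff s v (fun x => p.eval x) := by
    refine sum_congr rfl fun i hi => ?_
    simp [p, Lagrange.eval_nodal_at_node hi]
  have hcard : 0 < #s := hne.card_pos
  rw [hnodes, divDiff_eval_of_degree_lt hvs hp, coeff_sub, coeff_X_pow,
    if_neg (by omega), Lagrange.nodal_eq, prod_X_sub_C_coeff_card_pred s v hcard]
  ring

theorem coeff_mul_basisDivisor_succ {p : F[X]} {n : ℕ} (hp : p.degree < ↑(n + 1)) (x y : F) :
    (p * Lagrange.basisDivisor x y).coeff (n + 1) = (x - y)⁻¹ * p.coeff n := by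
  rw [Lagrange.basisDivisor, mul_left_comm, coeff_C_mul, coeff_mul_X_sub_C,
    coeff_eq_zero_of_degree_lt hp, zero_mul, sub_zero]

theorem divDiff_eq_sub_div {s : Finset ι} {v : ι → F} (hvs : Set.InjOn v s) (G : F → F)
    {a b : ι} (ha : a ∈ s) (hb : b ∈ s) (hab : a ≠ b) :
    divDiff s v G = (divDiff (s.erase b) v G - divDiff (s.erase a) v G) / (v a - v b) := by
  have hvab : v a - v b ≠ 0 := sub_ne_zero.2 fun h => hab (hvs ha hb h)
  obtain ⟨n, hn⟩ : ∃ n, #s = n + 2 := ⟨#s - 2, by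
    have := one_lt_card.2 ⟨a, ha, b, hb, hab⟩; omega⟩
  have hcard : ∀ c ∈ s, #(s.erase c) = n + 1 := fun c hc => by rw [card_erase_of_mem hc, hn]; rfl
  have hdeg : ∀ c ∈ s, (Lagrange.interpolate (s.erase c) v fun i => G (v i)).degree
      < ↑(n + 1) := fun c hc => hcard c hc ▸ Lagrange.degree_interpolate_lt _
        (hvs.mono (coe_subset.2 (erase_subset _ _)))
  rw [divDiff_eq_coeff_interpolate, Lagrange.interpolate_eq_add_interpolate_erase _ hvs ha hb hab,
    hn, show n + 2 - 1 = n + 1 from rfl, coeff_add, coeff_mul_basisDivisor_succ (hdeg b hb),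
    coeff_mul_basisDivisor_succ (hdeg a ha), divDiff_eq_coeff_interpolate,
    divDiff_eq_coeff_interpolate, hcard a ha, hcard b hb, Nat.add_sub_cancel, ← neg_sub (v a),
    inv_neg]
  field_simp
  ring

theorem divDiff_comp {κ : Type*} [DecidableEq κ] (t : Finset κ) (v : ι → F) (G : F → F)
    {f : κ → ι} (hf : Function.Injective f) :
    divDiff t (v ∘ f) G = divDiff (t.image f) v G := by
  rw [divDiff, divDiff, sum_image fun a _ b _ h => hf h]
  refine sum_congr rfl fun i _ => ?_
  rw [← image_erase hf, prod_image fun a _ b _ h => hf h]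
  rfl

theorem divDiff_comp_succAbove {n : ℕ} (v : Fin (n + 1) → F) (G : F → F) (p : Fin (n + 1)) :
    divDiff univ (v ∘ p.succAbove) G = divDiff (univ.erase p) v G := by
  rw [divDiff_comp _ _ _ (Fin.succAbove_right_injective), Fin.image_succAbove_univ,
    compl_singleton]

end DividedDifference

section SolidSimplex

theorem setIntegral_prod_fiber {α β E : Type*} [MeasurableSpace α] [MeasurableSpace β]
    {μ : Measure α} {ν : Measure β} [SFinite μ] [SFinite ν] [NormedAddCommGroup E]
    [NormedSpace ℝ E] {s : Set β} {I : β → Set α} {f : α × β → E} (hs : MeasurableSet s)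
    (hE : MeasurableSet {z : α × β | z.2 ∈ s ∧ z.1 ∈ I z.2})
    (hf : IntegrableOn f {z : α × β | z.2 ∈ s ∧ z.1 ∈ I z.2} (μ.prod ν)) :
    ∫ z in {z : α × β | z.2 ∈ s ∧ z.1 ∈ I z.2}, f z ∂(μ.prod ν)
      = ∫ y in s, ∫ x in I y, f (x, y) ∂μ ∂ν := by
  rw [← integral_indicator hE, integral_prod_symm _ ((integrable_indicator_iff hE).2 hf),
    ← integral_indicator hs]
  congr 1 with y
  by_cases hy : y ∈ s
  · have hfiber : (fun x => (x, y)) ⁻¹' {z : α × β | z.2 ∈ s ∧ z.1 ∈ I z.2} = I y := by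
      ext x
      simp [hy]
    rw [Set.indicator_of_mem hy, ← integral_indicator (hfiber ▸ measurable_prodMk_right hE)]
    congr 1 with x
    by_cases hx : x ∈ I y <;> simp [Set.indicator, hx, hy]
  · simp [Set.indicator, hy]

def solidSimplex (m : ℕ) : Set (Fin m → ℝ) := {y | (∀ i, 0 ≤ y i) ∧ ∑ i, y i ≤ 1}

theorem isClosed_solidSimplex (m : ℕ) : IsClosed (solidSimplex m) := by
  rw [solidSimplex, Set.ofPred_and, Set.ofPred_forall]
  exact (isClosed_iInter fun i => isClosed_le continuous_const (continuous_apply i)).inter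
    (isClosed_le (continuous_finsetSum _ fun i _ => continuous_apply i) continuous_const)

theorem measurableSet_solidSimplex (m : ℕ) : MeasurableSet (solidSimplex m) :=
  (isClosed_solidSimplex m).measurableSet

theorem isCompact_solidSimplex (m : ℕ) : IsCompact (solidSimplex m) := by
  refine isCompact_univ_pi (fun _ => isCompact_Icc (a := (0 : ℝ)) (b := 1))
    |>.of_isClosed_subset (isClosed_solidSimplex m) fun y ⟨h0, h1⟩ i _ => ⟨h0 i, ?_⟩
  exact (single_le_sum (fun j _ => h0 j) (mem_univ i)).trans h1

theorem snoc_mem_solidSimplex_iff {m : ℕ} (y : Fin m → ℝ) (t : ℝ) :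
    Fin.snoc y t ∈ solidSimplex (m + 1) ↔ y ∈ solidSimplex m ∧ t ∈ Set.Icc 0 (1 - ∑ i, y i) := by
  simp only [solidSimplex, Set.mem_ofPred_eq, Fin.forall_fin_succ', Fin.snoc_castSucc,
    Fin.snoc_last, Fin.sum_univ_castSucc, Set.mem_Icc]
  constructor
  · rintro ⟨⟨hy, ht⟩, hsum⟩
    exact ⟨⟨hy, by linarith [sum_nonneg fun i (_ : i ∈ univ) => hy i]⟩, ht, by linarith⟩
  · rintro ⟨⟨hy, -⟩, ht, hts⟩
    exact ⟨⟨hy, ht⟩, by linarith⟩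

theorem setIntegral_solidSimplex_succ {m : ℕ} {f : (Fin (m + 1) → ℝ) → ℝ}
    (hf : IntegrableOn f (solidSimplex (m + 1))) :
    ∫ x in solidSimplex (m + 1), f x
      = ∫ y in solidSimplex m, ∫ t in Set.Icc 0 (1 - ∑ i, y i), f (Fin.snoc y t) := by
  let e : ℝ × (Fin m → ℝ) ≃ᵐ (Fin (m + 1) → ℝ) :=
    (MeasurableEquiv.piFinSuccAbove (fun _ : Fin (m + 1) => ℝ) (Fin.last m)).symm
  have he : ∀ z, e z = Fin.snoc z.2 z.1 := fun z => Fin.insertNth_last' z.1 z.2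
  have hmp : MeasurePreserving e (volume.prod volume) volume := by
    rw [← Measure.volume_eq_prod]
    exact (volume_preserving_piFinSuccAbove (fun _ : Fin (m + 1) => ℝ) (Fin.last m)).symm
  have hpre : e ⁻¹' solidSimplex (m + 1)
      = {z | z.2 ∈ solidSimplex m ∧ z.1 ∈ Set.Icc 0 (1 - ∑ i, z.2 i)} := by
    ext z
    rw [Set.mem_preimage, he, snoc_mem_solidSimplex_iff]
    rfl
  have hmeas : MeasurableSet (e ⁻¹' solidSimplex (m + 1)) :=
    e.measurable (measurableSet_solidSimplex _)
  have hfe : IntegrableOn (fun z => f (e z)) (e ⁻¹' solidSimplex (m + 1)) (volume.prod volume) :=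
    (hmp.integrableOn_comp_preimage e.measurableEmbedding).2 hf
  rw [hpre] at hmeas hfe
  rw [← hmp.setIntegral_preimage_emb e.measurableEmbedding, hpre]
  rw [setIntegral_prod_fiber (I := fun y => Set.Icc 0 (1 - ∑ i, y i)) (f := fun z => f (e z))
    (μ := volume) (ν := volume) (measurableSet_solidSimplex m) hmeas]
  · simp only [he]
  · exact hfe

end SolidSimplex

section HermiteGenocchi

def simplexEmbed {m : ℕ} (y : Fin m → ℝ) : Fin (m + 1) → ℝ := Fin.snoc y (1 - ∑ i, y i)

theorem dotProduct_simplexEmbed {m : ℕ} (ν : Fin (m + 1) → ℝ) (y : Fin m → ℝ) :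
    ν ⬝ᵥ simplexEmbed y = ν (Fin.last m) + ∑ i, (ν i.castSucc - ν (Fin.last m)) * y i := by
  simp only [dotProduct, simplexEmbed, Fin.sum_univ_castSucc, Fin.snoc_castSucc, Fin.snoc_last,
    sub_mul, sum_sub_distrib, ← mul_sum]
  ring

theorem continuous_dotProduct_simplexEmbed {m : ℕ} (ν : Fin (m + 1) → ℝ) :
    Continuous fun y : Fin m → ℝ => ν ⬝ᵥ simplexEmbed y := by
  simp only [dotProduct_simplexEmbed]
  fun_prop

theorem integrableOn_solidSimplex_comp_dotProduct {m : ℕ} (ν : Fin (m + 1) → ℝ) {f : ℝ → ℝ}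
    (hf : Continuous f) :
    IntegrableOn (fun y => f (ν ⬝ᵥ simplexEmbed y)) (solidSimplex m) :=
  (hf.comp (continuous_dotProduct_simplexEmbed ν)).continuousOn.integrableOn_compact
    (isCompact_solidSimplex m)

theorem succAbove_castSucc_last_castSucc {m : ℕ} (i : Fin m) :
    (Fin.last m).castSucc.succAbove i.castSucc = i.castSucc.castSucc :=
  Fin.succAbove_of_castSucc_lt _ _ (Fin.castSucc_lt_castSucc_iff.2 (Fin.castSucc_lt_last i))

theorem dotProduct_simplexEmbed_snoc {m : ℕ} (ν : Fin (m + 1 + 1) → ℝ) (y : Fin m → ℝ) (t : ℝ) :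
    ν ⬝ᵥ simplexEmbed (Fin.snoc y t : Fin (m + 1) → ℝ)
      = (ν ∘ (Fin.last m).castSucc.succAbove) ⬝ᵥ simplexEmbed y
        + (ν (Fin.last m).castSucc - ν (Fin.last (m + 1))) * t := by
  simp only [dotProduct_simplexEmbed, Fin.sum_univ_castSucc, Fin.snoc_castSucc, Fin.snoc_last,
    Function.comp_apply, succAbove_castSucc_last_castSucc,
    Fin.succAbove_castSucc_self, Fin.succ_last]
  ring

theorem dotProduct_castSucc_simplexEmbed {m : ℕ} (ν : Fin (m + 1 + 1) → ℝ) (y : Fin m → ℝ) :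
    (ν ∘ Fin.castSucc) ⬝ᵥ simplexEmbed y
      = (ν ∘ (Fin.last m).castSucc.succAbove) ⬝ᵥ simplexEmbed y
        + (ν (Fin.last m).castSucc - ν (Fin.last (m + 1))) * (1 - ∑ i, y i) := by
  simp only [dotProduct_simplexEmbed, Function.comp_apply,
    succAbove_castSucc_last_castSucc,
    Fin.succAbove_castSucc_self, Fin.succ_last, sub_mul, sum_sub_distrib, ← mul_sum]
  ring

theorem integral_Icc_comp_add_mul {g G : ℝ → ℝ} (hg : Continuous g)
    (hG : ∀ x, HasDerivAt G (g x) x) (a : ℝ) {L c : ℝ} (hL : L ≠ 0) (hc : 0 ≤ c) :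
    ∫ t in Set.Icc 0 c, g (a + L * t) = (G (a + L * c) - G a) / L := by
  have hderiv : ∀ t ∈ Set.uIcc 0 c,
      HasDerivAt (fun t => G (a + L * t) / L) (g (a + L * t)) t := fun t _ => by
    have h := ((hG _).comp t (((hasDerivAt_id t).const_mul L).const_add a)).div_const L
    simpa [hL] using h
  rw [integral_Icc_eq_integral_Ioc, ← intervalIntegral.integral_of_le hc,
    intervalIntegral.integral_eq_sub_of_hasDerivAt hderiv
      ((hg.comp (by fun_prop)).intervalIntegrable _ _),
    mul_zero, add_zero, sub_div]

theorem integral_solidSimplex_succ_eq_div {m : ℕ} {g G : ℝ → ℝ} (hg : Continuous g)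
    (hG : ∀ x, HasDerivAt G (g x) x) {ν : Fin (m + 1 + 1) → ℝ}
    (hν : ν (Fin.last m).castSucc ≠ ν (Fin.last (m + 1))) :
    ∫ y in solidSimplex (m + 1), g (ν ⬝ᵥ simplexEmbed y)
      = ((∫ y in solidSimplex m, G ((ν ∘ Fin.castSucc) ⬝ᵥ simplexEmbed y))
          - ∫ y in solidSimplex m, G ((ν ∘ (Fin.last m).castSucc.succAbove) ⬝ᵥ simplexEmbed y))
        / (ν (Fin.last m).castSucc - ν (Fin.last (m + 1))) := by
  have hGc : Continuous G := continuous_iff_continuousAt.2 fun x => (hG x).continuousAt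
  have hinner : ∀ y ∈ solidSimplex m,
      ∫ t in Set.Icc 0 (1 - ∑ i, y i), g (ν ⬝ᵥ simplexEmbed (Fin.snoc y t : Fin (m + 1) → ℝ))
        = (G ((ν ∘ Fin.castSucc) ⬝ᵥ simplexEmbed y)
            - G ((ν ∘ (Fin.last m).castSucc.succAbove) ⬝ᵥ simplexEmbed y))
          / (ν (Fin.last m).castSucc - ν (Fin.last (m + 1))) := fun y hy => by
    simp only [dotProduct_simplexEmbed_snoc, dotProduct_castSucc_simplexEmbed]
    exact integral_Icc_comp_add_mul hg hG _ (sub_ne_zero.2 hν) (by linarith [hy.2])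
  rw [setIntegral_solidSimplex_succ (integrableOn_solidSimplex_comp_dotProduct ν hg),
    setIntegral_congr_fun (measurableSet_solidSimplex m) hinner, integral_div,
    integral_sub (integrableOn_solidSimplex_comp_dotProduct _ hGc)
      (integrableOn_solidSimplex_comp_dotProduct _ hGc)]

theorem volume_solidSimplex_zero : volume (solidSimplex 0) = 1 := by
  rw [show solidSimplex 0 = Set.univ by ext y; simp [solidSimplex], volume_pi, Measure.pi_univ]
  simp

theorem integral_iteratedDeriv_solidSimplex_eq_divDiff {m : ℕ} {G : ℝ → ℝ}
    (hG : ContDiff ℝ m G) {ν : Fin (m + 1) → ℝ} (hν : Function.Injective ν) :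
    ∫ y in solidSimplex m, iteratedDeriv m G (ν ⬝ᵥ simplexEmbed y) = divDiff univ ν G := by
  induction m with
  | zero =>
    have hν0 : ∀ y : Fin 0 → ℝ, ν ⬝ᵥ simplexEmbed y = ν 0 := fun y => by
      simp [dotProduct_simplexEmbed]
    simp [hν0, divDiff, Measure.real, volume_solidSimplex_zero]
  | succ m ih =>
    set p : Fin (m + 1 + 1) := (Fin.last m).castSucc
    have hp : p ≠ Fin.last (m + 1) := (Fin.castSucc_lt_last _).ne
    have hderiv : ∀ x, HasDerivAt (iteratedDeriv m G) (iteratedDeriv (m + 1) G x) x := fun x => by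
      rw [iteratedDeriv_succ]
      exact ((hG.differentiable_iteratedDeriv' m).differentiableAt).hasDerivAt
    rw [integral_solidSimplex_succ_eq_div (hG.continuous_iteratedDeriv' (m + 1)) hderiv
        (hν.ne hp), ih hG.of_succ (hν.comp (Fin.castSucc_injective _)),
      ih hG.of_succ (hν.comp Fin.succAbove_right_injective), ← Fin.succAbove_last,
      divDiff_comp_succAbove, divDiff_comp_succAbove, Fin.succAbove_last_apply,
      divDiff_eq_sub_div hν.injOn G (mem_univ p) (mem_univ _) hp]

end HermiteGenocchi

section EtaPrimitive

-- As `Real.log 0 = 0` and `Real.log (-y) = Real.log y`, this is `Cᵏ` on all of `ℝ`.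
noncomputable def etaPrimitive (k : ℕ) (y : ℝ) : ℝ :=
  (harmC (k + 1) * y ^ (k + 1) - y ^ (k + 1) * Real.log y) / (k + 1)!

theorem harmC_succ_succ (k : ℕ) : harmC (k + 2) = harmC (k + 1) + 1 / (k + 2) := by
  rw [harmC, harmC, sum_Icc_succ_top (by omega)]
  push_cast
  ring

theorem etaPrimitive_zero : etaPrimitive 0 = eta := by
  funext y
  simp [etaPrimitive, eta, harmC]

theorem continuous_etaPrimitive (k : ℕ) : Continuous (etaPrimitive k) := by
  have h : (fun y : ℝ => y ^ (k + 1) * Real.log y) = fun y => y ^ k * (y * Real.log y) := by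
    funext y
    ring
  unfold etaPrimitive
  exact ((continuous_const.mul (continuous_pow _)).sub
    (h ▸ (continuous_pow k).mul Real.continuous_mul_log)).div_const _

theorem hasDerivAt_etaPrimitive_succ_of_ne (k : ℕ) {x : ℝ} (hx : x ≠ 0) :
    HasDerivAt (etaPrimitive (k + 1)) (etaPrimitive k x) x := by
  have hpow : HasDerivAt (fun y : ℝ => y ^ (k + 2)) ((k + 2) * x ^ (k + 1)) x := by
    simpa using hasDerivAt_pow (k + 2) x
  have h := ((hpow.const_mul (harmC (k + 2))).sub
    (hpow.mul (Real.hasDerivAt_log hx))).div_const ((k + 2)! : ℝ)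
  refine h.congr_deriv ?_
  rw [etaPrimitive, harmC_succ_succ, Nat.factorial_succ (k + 1)]
  push_cast
  field_simp
  ring

theorem hasDerivAt_etaPrimitive_succ (k : ℕ) (x : ℝ) :
    HasDerivAt (etaPrimitive (k + 1)) (etaPrimitive k x) x := by
  rcases eq_or_ne x 0 with rfl | hx
  · exact hasDerivAt_of_hasDerivAt_of_ne (fun _ hy => hasDerivAt_etaPrimitive_succ_of_ne k hy)
      (continuous_etaPrimitive _).continuousAt (continuous_etaPrimitive _).continuousAt
  · exact hasDerivAt_etaPrimitive_succ_of_ne k hx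

theorem deriv_etaPrimitive_succ (k : ℕ) : deriv (etaPrimitive (k + 1)) = etaPrimitive k :=
  funext fun x => (hasDerivAt_etaPrimitive_succ k x).deriv

theorem contDiff_etaPrimitive (k : ℕ) : ContDiff ℝ k (etaPrimitive k) := by
  induction k with
  | zero => exact contDiff_zero.2 (continuous_etaPrimitive 0)
  | succ k ih =>
    rw [Nat.cast_succ, contDiff_succ_iff_deriv, deriv_etaPrimitive_succ]
    exact ⟨fun x => (hasDerivAt_etaPrimitive_succ k x).differentiableAt, by simp, ih⟩

theorem iteratedDeriv_etaPrimitive (k : ℕ) : iteratedDeriv k (etaPrimitive k) = eta := by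
  induction k with
  | zero => rw [iteratedDeriv_zero, etaPrimitive_zero]
  | succ k ih => rw [iteratedDeriv_succ', deriv_etaPrimitive_succ, ih]

theorem divDiff_etaPrimitive {ι : Type*} [DecidableEq ι] (s : Finset ι) (v : ι → ℝ) (k : ℕ) :
    divDiff s v (etaPrimitive k)
      = (harmC (k + 1) * divDiff s v (· ^ (k + 1))
          - divDiff s v (fun y => y ^ (k + 1) * Real.log y)) / (k + 1)! := by
  rw [divDiff, divDiff, divDiff, mul_sum, ← sum_sub_distrib, sum_div]
  refine sum_congr rfl fun i _ => ?_
  simp only [etaPrimitive]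
  ring

theorem simplexIntegral_succ (m : ℕ) (f : (Fin (m + 1) → ℝ) → ℝ) :
    simplexIntegral (m + 1) f = m ! * ∫ y in solidSimplex m, f (simplexEmbed y) := by
  have hembed : ∀ y : Fin m → ℝ, (fun i : Fin (m + 1) =>
      if h : (i : ℕ) < m then y ⟨i, h⟩ else 1 - ∑ j, y j) = simplexEmbed y := fun y => by
    funext i
    refine Fin.lastCases ?_ (fun j => ?_) i <;> simp [simplexEmbed]
  change (m ! : ℝ) * ∫ y in solidSimplex m,
    f (fun i : Fin (m + 1) => if h : (i : ℕ) < m then y ⟨i, h⟩ else 1 - ∑ j, y j) = _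
  simp only [hembed]

end EtaPrimitive

theorem subentropy_closed_form_eq_integral_general (n : ℕ) (lam : Fin n → ℝ)
    (hsum : ∑ i, lam i = 1)
    (hdist : ∀ i j, i ≠ j → lam i ≠ lam j) :
    -∑ i, (lam i ^ n / ∏ j ∈ Finset.univ.erase i, (lam i - lam j)) * Real.log (lam i)
      = (n : ℝ) * simplexIntegral n (fun x => eta (∑ i, lam i * x i)) - harmC n := by
  obtain ⟨m, rfl⟩ : ∃ m, n = m + 1 :=
    Nat.exists_eq_succ_of_ne_zero (by rintro rfl; simp at hsum)
  have hinj : Function.Injective lam := fun i j h => by_contra fun hij => hdist i j hij h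
  have hpow : divDiff univ lam (· ^ (m + 1)) = 1 := by
    have h := divDiff_pow_card (s := univ) hinj.injOn
    rwa [card_univ, Fintype.card_fin, hsum] at h
  have hintegral : simplexIntegral (m + 1) (fun x => eta (∑ i, lam i * x i))
      = (m ! : ℝ) * divDiff univ lam (etaPrimitive m) := by
    rw [simplexIntegral_succ, ← integral_iteratedDeriv_solidSimplex_eq_divDiff
      (contDiff_etaPrimitive m) hinj, iteratedDeriv_etaPrimitive]
    rfl
  rw [hintegral, divDiff_etaPrimitive, hpow, Nat.factorial_succ, divDiff]
  simp only [div_mul_eq_mul_div]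
  push_cast
  field_simp
  ring

/-- for a probability vector with pairwise distinct, strictly positive
entries, the closed-form expression for subentropy agrees with the integral expression. -/
theorem subentropy_closed_form_eq_integral (n : ℕ) (hn : 1 ≤ n) (lam : Fin n → ℝ)
    (hpos : ∀ i, 0 < lam i) (hsum : ∑ i, lam i = 1)
    (hdist : ∀ i j, i ≠ j → lam i ≠ lam j) :
    -∑ i, (lam i ^ n / ∏ j ∈ Finset.univ.erase i, (lam i - lam j)) * Real.log (lam i)
      = (n : ℝ) * simplexIntegral n (fun x => eta (∑ i, lam i * x i)) - harmC n :=
  subentropy_closed_form_eq_integral_general n lam hsum hdist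
end

section
/- Subentropy is concave as a function of the density matrix: if ρ_1, …, ρ_m are n×n density matrices and (q_1, …, q_m) is a probability distribution, then Q(Σ_{i=1}^m q_i ρ_i) ≥ Σ_{i=1}^m q_i Q(ρ_i). -/
open MeasureTheory Matrix
open scoped ComplexOrder

open scoped InnerProductSpace

/-!
Subentropy `F` is concave on the nonnegative orthant, because `η` is concave and `F` averages
`η` composed with linear functionals over the simplex. It is also symmetric: in the chart
`(x₁, …, x_{n-1})` of the simplex, exchanging a coordinate with the implicit last one
`1 - ∑ xᵢ` is an affine involution, hence preserves Lebesgue measure, and such transpositions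
generate all permutations.

For `ρ = ∑ qᵢ ρᵢ` with orthonormal eigenbasis `(u_j)`, and `ρᵢ` with eigenbasis `(vᵢₖ)` and
eigenvalues `λ(ρᵢ)`, we get `λ_j(ρ) = ⟪u_j, ρ u_j⟫ = ∑ᵢ qᵢ (Bᵢ λ(ρᵢ))_j` where
`Bᵢ = (‖⟪u_j, vᵢₖ⟫‖²)_{jk}` is doubly stochastic. By Birkhoff's theorem `Bᵢ λ(ρᵢ)` is a convex
combination of permutations of `λ(ρᵢ)`, so `F(Bᵢ λ(ρᵢ)) ≥ F(λ(ρᵢ))` by concavity and symmetry,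
and concavity once more gives `F(λ(ρ)) ≥ ∑ᵢ qᵢ F(Bᵢ λ(ρᵢ))`.
-/

theorem concaveOn_integral {α E : Type*} [MeasurableSpace α] {μ : Measure α}
    [AddCommGroup E] [Module ℝ E] {s : Set E} {g : E → α → ℝ} (hs : Convex ℝ s)
    (hg : ∀ᵐ a ∂μ, ConcaveOn ℝ s (g · a)) (hint : ∀ x ∈ s, Integrable (g x) μ) :
    ConcaveOn ℝ s (fun x => ∫ a, g x a ∂μ) := by
  refine ⟨hs, fun x hx y hy a b ha hb hab => ?_⟩
  simp only [smul_eq_mul]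
  rw [← integral_const_mul, ← integral_const_mul,
    ← integral_add ((hint x hx).const_mul a) ((hint y hy).const_mul b)]
  refine integral_mono_ae (((hint x hx).const_mul a).add ((hint y hy).const_mul b))
    (hint _ (hs hx hy ha hb hab)) ?_
  filter_upwards [hg] with t ht
  exact ht.2 hx hy ha hb hab

theorem LinearMap.measurePreserving_of_involutive {E : Type*} [NormedAddCommGroup E]
    [NormedSpace ℝ E] [MeasurableSpace E] [BorelSpace E] [FiniteDimensional ℝ E]
    (μ : Measure E) [μ.IsAddHaarMeasure] {f : E →ₗ[ℝ] E} (hf : f ∘ₗ f = LinearMap.id) :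
    MeasurePreserving f μ μ := by
  have hdet : LinearMap.det f * LinearMap.det f = 1 := by
    rw [← LinearMap.det_comp, hf, LinearMap.det_id]
  have habs : |LinearMap.det f| = 1 := by
    rcases mul_self_eq_one_iff.mp hdet with h | h <;> simp [h]
  refine ⟨f.continuous_of_finiteDimensional.measurable, ?_⟩
  rw [Measure.map_linearMap_addHaar_eq_smul_addHaar μ (fun h => by simp [h] at hdet), abs_inv, habs,
    inv_one, ENNReal.ofReal_one, one_smul]

theorem setIntegral_comp_of_involutive {α G : Type*} [MeasurableSpace α] [NormedAddCommGroup G]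
    [NormedSpace ℝ G] {μ : Measure α} {f : α → α} (hf : Function.Involutive f)
    (hμ : MeasurePreserving f μ μ) {s : Set α} (hs : Set.MapsTo f s s) (g : α → G) :
    ∫ x in s, g (f x) ∂μ = ∫ x in s, g x ∂μ := by
  have hpre : f ⁻¹' s = s :=
    Set.Subset.antisymm (fun x hx => hf x ▸ hs hx) fun x hx => hs hx
  have := hμ.setIntegral_preimage_emb
    (MeasurableEquiv.ofInvolutive f hf hμ.measurable).measurableEmbedding g s
  rwa [hpre] at this

lemma sum_update_eq_sum_sub_add {ι : Type*} [Fintype ι] [DecidableEq ι] (y : ι → ℝ) (k : ι)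
    (a : ℝ) :
    ∑ i, Function.update y k a i = ∑ i, y i - y k + a := by
  rw [Finset.sum_update_of_mem (Finset.mem_univ k), Finset.sdiff_singleton_eq_erase,
    Finset.sum_erase_eq_sub (Finset.mem_univ k)]
  ring

theorem ConcaveOn.le_map_mulVec_of_mem_doublyStochastic {ι : Type*} [Fintype ι] [DecidableEq ι]
    {s : Set (ι → ℝ)} {f : (ι → ℝ) → ℝ} (hf : ConcaveOn ℝ s f)
    (hs : ∀ σ : Equiv.Perm ι, ∀ x ∈ s, x ∘ σ ∈ s)
    (hfσ : ∀ σ : Equiv.Perm ι, ∀ x ∈ s, f (x ∘ σ) = f x)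
    {M : Matrix ι ι ℝ} (hM : M ∈ doublyStochastic ℝ ι) {x : ι → ℝ} (hx : x ∈ s) :
    f x ≤ f (M *ᵥ x) := by
  obtain ⟨w, hw0, hw1, rfl⟩ := exists_eq_sum_perm_of_mem_doublyStochastic hM
  have hmem : (∑ σ, w σ • σ.permMatrix ℝ) *ᵥ x ∈
      convexHull ℝ (Set.range fun σ : Equiv.Perm ι => x ∘ σ) := by
    refine mem_convexHull_of_exists_fintype w (fun σ => x ∘ σ) hw0 hw1 (fun σ => ⟨σ, rfl⟩) ?_
    simp [Matrix.sum_mulVec, Matrix.smul_mulVec, Matrix.permMatrix_mulVec]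
  obtain ⟨_, ⟨σ, rfl⟩, hle⟩ :=
    hf.exists_le_of_mem_convexHull (Set.range_subset_iff.2 fun σ => hs σ x hx) hmem
  exact (hfσ σ x hx).ge.trans hle

lemma mulVec_nonneg_of_mem_doublyStochastic {ι : Type*} [Fintype ι] [DecidableEq ι]
    {M : Matrix ι ι ℝ} (hM : M ∈ doublyStochastic ℝ ι) {x : ι → ℝ} (hx : 0 ≤ x) :
    0 ≤ M *ᵥ x :=
  fun _ => Finset.sum_nonneg fun k _ => mul_nonneg (nonneg_of_mem_doublyStochastic hM) (hx k)

theorem OrthonormalBasis.norm_inner_sq_mem_doublyStochastic {ι 𝕜 E : Type*} [Fintype ι]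
    [DecidableEq ι] [RCLike 𝕜] [NormedAddCommGroup E] [InnerProductSpace 𝕜 E]
    (b c : OrthonormalBasis ι 𝕜 E) :
    Matrix.of (fun i j => ‖⟪b i, c j⟫_𝕜‖ ^ 2) ∈ doublyStochastic ℝ ι := by
  rw [mem_doublyStochastic_iff_sum]
  refine ⟨fun _ _ => sq_nonneg _, fun i => ?_, fun j => ?_⟩
  · simp [c.sum_sq_norm_inner_left (b i), b.orthonormal.1 i]
  · simp [b.sum_sq_norm_inner_right (c j), c.orthonormal.1 j]

namespace Matrix.IsHermitian

variable {𝕜 ι : Type*} [RCLike 𝕜] [Fintype ι] [DecidableEq ι] {A : Matrix ι ι 𝕜}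

lemma eigenvalues_eq_re_inner (hA : A.IsHermitian) (j : ι) :
    hA.eigenvalues j =
      RCLike.re ⟪hA.eigenvectorBasis j, toEuclideanLin A (hA.eigenvectorBasis j)⟫_𝕜 := by
  rw [hA.eigenvalues_eq, EuclideanSpace.inner_eq_star_dotProduct, dotProduct_comm]
  rfl

lemma re_inner_toEuclideanLin_self (hA : A.IsHermitian) (x : EuclideanSpace 𝕜 ι) :
    RCLike.re ⟪x, toEuclideanLin A x⟫_𝕜 =
      ∑ k, hA.eigenvalues k * ‖⟪x, hA.eigenvectorBasis k⟫_𝕜‖ ^ 2 := by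
  have hT := isSymmetric_toEuclideanLin_iff.mpr hA
  have heig : ∀ k, toEuclideanLin A (hA.eigenvectorBasis k) =
      (hA.eigenvalues k : 𝕜) • hA.eigenvectorBasis k := fun k => by
    rw [toLpLin_apply, hA.mulVec_eigenvectorBasis, RCLike.real_smul_eq_coe_smul (K := 𝕜)]
    rfl
  rw [← hA.eigenvectorBasis.sum_inner_mul_inner, map_sum]
  refine Finset.sum_congr rfl fun k _ => ?_
  rw [← hT, heig, inner_smul_left, RCLike.conj_ofReal, mul_left_comm, RCLike.re_ofReal_mul,
    inner_mul_symm_re_eq_norm, norm_mul, norm_inner_symm, sq]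

theorem eigenvalues_eq_sum_smul_mulVec {κ : Type*} [Fintype κ] {ρ : κ → Matrix ι ι 𝕜}
    (hρ : ∀ i, (ρ i).IsHermitian) (c : κ → ℝ) (hA : (∑ i, (c i : 𝕜) • ρ i).IsHermitian) :
    hA.eigenvalues = ∑ i, c i • (Matrix.of (fun j k =>
      ‖⟪hA.eigenvectorBasis j, (hρ i).eigenvectorBasis k⟫_𝕜‖ ^ 2) *ᵥ (hρ i).eigenvalues) := by
  funext j
  rw [hA.eigenvalues_eq_re_inner, map_sum, LinearMap.sum_apply, inner_sum, map_sum]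
  simp only [map_smul, LinearMap.smul_apply, inner_smul_right, RCLike.re_ofReal_mul,
    (hρ _).re_inner_toEuclideanLin_self, Finset.sum_apply, Pi.smul_apply, smul_eq_mul, mulVec,
    dotProduct, of_apply, mul_comm]

end Matrix.IsHermitian

def cornerSimplex (N : ℕ) : Set (Fin N → ℝ) := {y | (∀ i, 0 ≤ y i) ∧ ∑ i, y i ≤ 1}

noncomputable def simplexChart (n : ℕ) (y : Fin (n - 1) → ℝ) : Fin n → ℝ :=
  fun i => if h : (i : ℕ) < n - 1 then y ⟨(i : ℕ), h⟩ else 1 - ∑ j, y j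

lemma simplexIntegral_eq (n : ℕ) (f : (Fin n → ℝ) → ℝ) :
    simplexIntegral n f =
      ((n - 1).factorial : ℝ) * ∫ y in cornerSimplex (n - 1), f (simplexChart n y) :=
  rfl

lemma isCompact_cornerSimplex (N : ℕ) : IsCompact (cornerSimplex N) := by
  have hclosed : IsClosed (cornerSimplex N) :=
    (isClosed_Ici (a := (0 : Fin N → ℝ))).inter
      (isClosed_le (continuous_finsetSum _ fun i _ => continuous_apply i) continuous_const)
  refine (isCompact_Icc (a := (0 : Fin N → ℝ)) (b := 1)).of_isClosed_subset hclosed ?_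
  intro y hy
  exact ⟨hy.1, fun i => (Finset.single_le_sum (fun j _ => hy.1 j) (Finset.mem_univ i)).trans hy.2⟩

lemma continuous_simplexChart (n : ℕ) : Continuous (simplexChart n) := by
  refine continuous_pi fun i => ?_
  by_cases h : (i : ℕ) < n - 1
  · simp only [simplexChart, dif_pos h]
    fun_prop
  · simp only [simplexChart, dif_neg h]
    fun_prop

lemma simplexChart_nonneg {n : ℕ} {y : Fin (n - 1) → ℝ} (hy : y ∈ cornerSimplex (n - 1)) :
    0 ≤ simplexChart n y := by
  intro i
  by_cases h : (i : ℕ) < n - 1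
  · simpa [simplexChart, h] using hy.1 _
  · simpa [simplexChart, h] using hy.2

section SimplexSymmetry

variable {N : ℕ}

lemma simplexChart_castSucc (y : Fin N → ℝ) (i : Fin N) :
    simplexChart (N + 1) y i.castSucc = y i := by
  simp [simplexChart]

lemma simplexChart_last (y : Fin N → ℝ) :
    simplexChart (N + 1) y (Fin.last N) = 1 - ∑ j, y j := by
  simp [simplexChart]


noncomputable def cornerReflection (k : Fin N) (y : Fin N → ℝ) : Fin N → ℝ :=
  Function.update y k (1 - ∑ j, y j)

lemma sum_cornerReflection (k : Fin N) (y : Fin N → ℝ) :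
    ∑ i, cornerReflection k y i = 1 - y k := by
  rw [cornerReflection, sum_update_eq_sum_sub_add]
  ring

lemma cornerReflection_involutive (k : Fin N) : Function.Involutive (cornerReflection k) := by
  intro y
  rw [cornerReflection, sum_cornerReflection, cornerReflection, Function.update_idem,
    sub_sub_cancel, Function.update_eq_self]

lemma mapsTo_cornerReflection (k : Fin N) :
    Set.MapsTo (cornerReflection k) (cornerSimplex N) (cornerSimplex N) := by
  intro y hy
  refine ⟨fun i => ?_, by rw [sum_cornerReflection]; linarith [hy.1 k]⟩
  rcases eq_or_ne i k with rfl | hik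
  · simpa [cornerReflection] using hy.2
  · simpa [cornerReflection, hik] using hy.1 i

lemma measurePreserving_cornerReflection (k : Fin N) :
    MeasurePreserving (cornerReflection k) volume volume := by
  let L : (Fin N → ℝ) →ₗ[ℝ] (Fin N → ℝ) :=
    { toFun := fun y => Function.update y k (-∑ j, y j)
      map_add' := fun y z => by
        ext i
        rcases eq_or_ne i k with rfl | hik
        · simp only [Pi.add_apply, Function.update_self, Finset.sum_add_distrib]
          ring
        · simp [hik]
      map_smul' := fun c y => by
        ext i
        rcases eq_or_ne i k with rfl | hik
        · simp [Finset.mul_sum]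
        · simp [hik] }
  have hL : L ∘ₗ L = LinearMap.id := by
    refine LinearMap.ext fun y => ?_
    simp [L, sum_update_eq_sum_sub_add]
  have hsplit : cornerReflection k = (· + Pi.single k 1) ∘ L := by
    ext y i
    rcases eq_or_ne i k with rfl | hik
    · simp only [cornerReflection, L, LinearMap.coe_mk, AddHom.coe_mk, Function.comp_apply,
        Pi.add_apply, Function.update_self, Pi.single_eq_same]
      ring
    · simp [cornerReflection, L, hik]
  rw [hsplit]
  exact (measurePreserving_add_right volume _).comp
    (L.measurePreserving_of_involutive volume hL)

lemma simplexChart_cornerReflection (k : Fin N) (y : Fin N → ℝ) :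
    simplexChart (N + 1) (cornerReflection k y) =
      simplexChart (N + 1) y ∘ Equiv.swap k.castSucc (Fin.last N) := by
  ext j
  induction j using Fin.lastCases with
  | last =>
    simp [simplexChart_last, simplexChart_castSucc, sum_cornerReflection]
  | cast i =>
    rcases eq_or_ne i k with rfl | hik
    · simp [simplexChart_last, simplexChart_castSucc, cornerReflection]
    · rw [Function.comp_apply, Equiv.swap_apply_of_ne_of_ne (by simpa using hik)
        (Fin.castSucc_lt_last i).ne]
      simp [simplexChart_castSucc, cornerReflection, hik]

def simplexSymmetries (N : ℕ) : Submonoid (Equiv.Perm (Fin (N + 1))) where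
  carrier := {σ | ∀ f : (Fin (N + 1) → ℝ) → ℝ,
    ∫ y in cornerSimplex N, f (simplexChart (N + 1) y ∘ σ) =
      ∫ y in cornerSimplex N, f (simplexChart (N + 1) y)}
  one_mem' _ := rfl
  mul_mem' {σ τ} hσ hτ f := by
    rw [← hτ f]
    exact hσ (fun x => f (x ∘ τ))

lemma swap_last_mem_simplexSymmetries (z : Fin (N + 1)) :
    Equiv.swap z (Fin.last N) ∈ simplexSymmetries N := by
  induction z using Fin.lastCases with
  | last =>
    rw [Equiv.swap_self]
    exact (simplexSymmetries N).one_mem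
  | cast k =>
    intro f
    simp_rw [← simplexChart_cornerReflection]
    exact setIntegral_comp_of_involutive (cornerReflection_involutive k)
      (measurePreserving_cornerReflection k) (mapsTo_cornerReflection k)
      (fun y => f (simplexChart (N + 1) y))

lemma simplexSymmetries_eq_top : simplexSymmetries N = ⊤ := by
  refine top_unique (Equiv.Perm.mclosure_isSwap.symm.le.trans (Submonoid.closure_le.2 ?_))
  rintro _ ⟨x, y, hxy, rfl⟩
  have hy : Equiv.swap (Fin.last N) y ∈ simplexSymmetries N := by
    rw [Equiv.swap_comm]
    exact swap_last_mem_simplexSymmetries y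
  rcases eq_or_ne x (Fin.last N) with rfl | hx
  · exact hy
  · rw [Equiv.swap_comm, ← Equiv.swap_mul_swap_mul_swap hx hxy]
    exact mul_mem (mul_mem hy (swap_last_mem_simplexSymmetries x)) hy

end SimplexSymmetry

theorem simplexIntegral_comp_perm (n : ℕ) (f : (Fin n → ℝ) → ℝ) (σ : Equiv.Perm (Fin n)) :
    simplexIntegral n (fun x => f (x ∘ σ)) = simplexIntegral n f := by
  cases n with
  | zero => simp only [Subsingleton.elim (σ : Fin 0 → Fin 0) id, Function.comp_id]
  | succ N =>
    rw [simplexIntegral_eq, simplexIntegral_eq]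
    congr 1
    exact (simplexSymmetries_eq_top ▸ Submonoid.mem_top σ : σ ∈ simplexSymmetries N) f

lemma eta_eq_negMulLog : eta = Real.negMulLog := by
  funext y
  simp [eta, Real.negMulLog, neg_mul]

theorem concaveOn_subF (n : ℕ) : ConcaveOn ℝ (Set.Ici 0) (subF n) := by
  have hconc : ∀ x : Fin n → ℝ, 0 ≤ x →
      ConcaveOn ℝ (Set.Ici 0) (fun lam : Fin n → ℝ => eta (∑ i, lam i * x i)) := by
    intro x hx
    rw [eta_eq_negMulLog]
    refine (Real.concaveOn_negMulLog.comp_linearMap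
      (Fintype.linearCombination ℝ x)).subset (fun lam hlam => ?_) (convex_Ici 0)
    simp only [Set.mem_preimage, Fintype.linearCombination_apply, smul_eq_mul, Set.mem_Ici]
    exact Finset.sum_nonneg fun i _ => mul_nonneg (hlam i) (hx i)
  have hint : ∀ lam : Fin n → ℝ, Integrable
      (fun y => eta (∑ i, lam i * simplexChart n y i))
      (volume.restrict (cornerSimplex (n - 1))) := by
    intro lam
    refine ContinuousOn.integrableOn_compact (isCompact_cornerSimplex _)
      (Continuous.continuousOn ?_)
    rw [eta_eq_negMulLog]
    have := continuous_simplexChart n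
    fun_prop
  have hae : ∀ᵐ y ∂(volume.restrict (cornerSimplex (n - 1))), ConcaveOn ℝ (Set.Ici 0)
      (fun lam : Fin n → ℝ => eta (∑ i, lam i * simplexChart n y i)) :=
    ae_restrict_of_forall_mem (isCompact_cornerSimplex _).measurableSet
      fun y hy => hconc _ (simplexChart_nonneg hy)
  have hI := concaveOn_integral (convex_Ici 0) hae (fun lam _ => hint lam)
  unfold subF
  simp_rw [simplexIntegral_eq]
  simpa only [sub_eq_add_neg, smul_eq_mul, Pi.add_def] using
    ((hI.smul (Nat.cast_nonneg _)).smul (Nat.cast_nonneg n)).add_const (-harmC n)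

theorem subF_comp_perm (n : ℕ) (lam : Fin n → ℝ) (σ : Equiv.Perm (Fin n)) :
    subF n (lam ∘ σ) = subF n lam := by
  have hsum : ∀ x : Fin n → ℝ, ∑ i, (lam ∘ σ) i * x i = ∑ i, lam i * (x ∘ σ.symm) i :=
    fun x => (Equiv.sum_comp σ.symm _).symm.trans (by simp)
  simp only [subF, hsum]
  rw [simplexIntegral_comp_perm n (fun x => eta (∑ i, lam i * x i)) σ.symm]

noncomputable def subFFintype (ι : Type*) [Fintype ι] (lam : ι → ℝ) : ℝ :=
  subF (Fintype.card ι) (lam ∘ (Fintype.equivFin ι).symm)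

lemma Qmat_eq_subFFintype {ι : Type} [Fintype ι] [DecidableEq ι] {ρ : Matrix ι ι ℂ}
    (hρ : ρ.IsHermitian) : Qmat ρ = subFFintype ι hρ.eigenvalues :=
  dif_pos hρ

theorem concaveOn_subFFintype (ι : Type*) [Fintype ι] : ConcaveOn ℝ (Set.Ici 0) (subFFintype ι) :=
  ((concaveOn_subF _).comp_linearMap (LinearMap.funLeft ℝ ℝ (Fintype.equivFin ι).symm)).subset
    (fun _ hlam _ => hlam _) (convex_Ici 0)

theorem subFFintype_comp_perm {ι : Type*} [Fintype ι] (lam : ι → ℝ) (σ : Equiv.Perm ι) :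
    subFFintype ι (lam ∘ σ) = subFFintype ι lam := by
  let e := Fintype.equivFin ι
  have h : lam ∘ σ ∘ e.symm = (lam ∘ e.symm) ∘ (e.symm.trans σ).trans e := by
    ext; simp
  rw [subFFintype, Function.comp_assoc, h, subF_comp_perm, subFFintype]

theorem subentropy_concave_general (n m : ℕ) (ρ : Fin m → Matrix (Fin n) (Fin n) ℂ)
    (hρ : ∀ i, (ρ i).PosSemidef)
    (q : Fin m → ℝ) (hq : ∀ i, 0 ≤ q i) (hqs : ∑ i, q i = 1) :
    Qmat (∑ i, (q i : ℂ) • ρ i) ≥ ∑ i, q i * Qmat (ρ i) := by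
  have hA : (∑ i, (q i : ℂ) • ρ i).IsHermitian :=
    (posSemidef_sum _ fun i _ => (hρ i).smul (by exact_mod_cast hq i)).isHermitian
  set B := fun i => Matrix.of fun j k =>
    ‖⟪hA.eigenvectorBasis j, (hρ i).isHermitian.eigenvectorBasis k⟫_ℂ‖ ^ 2
  have hB : ∀ i, B i ∈ doublyStochastic ℝ (Fin n) :=
    fun i => OrthonormalBasis.norm_inner_sq_mem_doublyStochastic _ _
  have hev : ∀ i, 0 ≤ (hρ i).isHermitian.eigenvalues := fun i => (hρ i).eigenvalues_nonneg
  have hconc := concaveOn_subFFintype (Fin n)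
  rw [ge_iff_le, Qmat_eq_subFFintype hA,
    hA.eigenvalues_eq_sum_smul_mulVec (fun i => (hρ i).isHermitian)]
  calc ∑ i, q i * Qmat (ρ i)
      ≤ ∑ i, q i * subFFintype (Fin n) (B i *ᵥ (hρ i).isHermitian.eigenvalues) := by
        refine Finset.sum_le_sum fun i _ => mul_le_mul_of_nonneg_left ?_ (hq i)
        rw [Qmat_eq_subFFintype (hρ i).isHermitian]
        exact hconc.le_map_mulVec_of_mem_doublyStochastic (fun σ x hx j => hx (σ j))
          (fun σ x _ => subFFintype_comp_perm x σ) (hB i) (hev i)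
    _ ≤ _ := hconc.le_map_sum (fun i _ => hq i) hqs
        fun i _ => mulVec_nonneg_of_mem_doublyStochastic (hB i) (hev i)

/-- subentropy is concave as a function of the density matrix. -/
theorem subentropy_concave (n m : ℕ) (ρ : Fin m → Matrix (Fin n) (Fin n) ℂ)
    (hρ : ∀ i, (ρ i).PosSemidef) (ht : ∀ i, (ρ i).trace = 1)
    (q : Fin m → ℝ) (hq : ∀ i, 0 ≤ q i) (hqs : ∑ i, q i = 1) :
    Qmat (∑ i, (q i : ℂ) • ρ i) ≥ ∑ i, q i * Qmat (ρ i) :=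
  subentropy_concave_general n m ρ hρ q hq hqs
end
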